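/- (Optimality of the risk-neutral separation controller.) Let Γ, L, N, M be as in the risk-neutral setting and let V satisfy the risk-neutral dynamic programming equation (V(ω,M) = ⟨ω,N⟩; V(ω,k) = inf_{u∈U} { ⟨ω,L(u)⟩ + ∑_{y∈Y} V(Λ_Γ(u,y)ω, k+1) p(y|u,ω) } for 0 ≤ k ≤ M−1). Suppose moreover that for every positive semidefinite ω and every 0 ≤ k ≤ M−1 there is a control u*(ω,k) ∈ U attaining the infimum. Fix a normalized initial state ω₀ and define the separation controller K* by u_k = u*(ω_k,k), where ω_{k+1} = Λ_Γ(u_k, y_{k+1}) ω_k. Then J_{ω₀,0}(K*) = V(ω₀,0), and consequently J_{ω₀,0}(K*) ≤ J_{ω₀,0}(K) for every feedback controller K. -/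

import Mathlib

/-!
Backward induction on the number of remaining steps. From a normalized state, the expected cost
of any controller satisfies the one-step recursion `J(ω) = ⟨ω, L(u)⟩ + ∑_y J(Λ_Γ(u,y)ω) p(y|u,ω)`
because the outcome probabilities along every continuation sum to one. Comparing with the dynamic
programming equation gives `V ≤ J` for every controller (the infimum lies below the value at the
controller's choice), with equality for the separation controller, which plays a minimizer at the
conditional state it tracks. Outcomes of probability zero drop out of every sum; this matters
since `Λ_Γ(u,y)ω = 0` is not normalized for them.
-/
open Matrix BigOperators
open scoped ComplexOrder

noncomputable section

/-- Complex `n × n` matrices. -/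
abbrev Mat (n : ℕ) := Matrix (Fin n) (Fin n) ℂ

/-- Real part of the trace. -/
def trR {n : ℕ} (A : Mat n) : ℝ := A.trace.re

/-- The probability `p(y|u,ω) = tr(Γ(u,y)ω)`. -/
def pDist {n : ℕ} {U Y : Type*} (Γ : U → Y → Mat n →ₗ[ℂ] Mat n)
    (u : U) (y : Y) (ω : Mat n) : ℝ := trR (Γ u y ω)

/-- The conditional state `Λ_Γ(u,y)ω = Γ(u,y)ω / p(y|u,ω)` (equal to `0` when
`p(y|u,ω) = 0`). -/
def lamState {n : ℕ} {U Y : Type*} (Γ : U → Y → Mat n →ₗ[ℂ] Mat n)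
    (u : U) (y : Y) (ω : Mat n) : Mat n := (pDist Γ u y ω)⁻¹ • Γ u y ω

/-- `∏_{i} p(y_{i+1}|u_i,ω_i)` along the measurement record `ys`, where the controller
`K` (a function of the accumulated record) chooses the controls and the state evolves
by `ω_{i+1} = Λ_Γ(u_i,y_{i+1}) ω_i`.  `rec` is the record accumulated so far. -/
def prodP {n : ℕ} {U Y : Type*} (Γ : U → Y → Mat n →ₗ[ℂ] Mat n)
    (K : List Y → U) : Mat n → List Y → List Y → ℝ
  | _, _, [] => 1
  | ω, rec, y :: ys =>
      pDist Γ (K rec) y ω * prodP Γ K (lamState Γ (K rec) y ω) (rec ++ [y]) ys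

/-- `∑_i ⟨ω_i, L(u_i)⟩ + ⟨ω_M, N⟩` along the measurement record `ys`. -/
def sumCost {n : ℕ} {U Y : Type*} (Γ : U → Y → Mat n →ₗ[ℂ] Mat n)
    (L : U → Mat n) (N : Mat n) (K : List Y → U) :
    Mat n → List Y → List Y → ℝ
  | ω, _, [] => trR (N * ω)
  | ω, rec, y :: ys =>
      trR (L (K rec) * ω) + sumCost Γ L N K (lamState Γ (K rec) y ω) (rec ++ [y]) ys

/-- The risk-neutral cost-to-go with `m` remaining steps:
`J_{ω}(K) = ∑_{y-sequences} (∏ p) · (∑ running costs + terminal cost)`. -/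
def Jrn {n : ℕ} {U Y : Type*} [Fintype Y] (Γ : U → Y → Mat n →ₗ[ℂ] Mat n)
    (L : U → Mat n) (N : Mat n) (m : ℕ) (K : List Y → U) (ω : Mat n) : ℝ :=
  ∑ ys : Fin m → Y,
    prodP Γ K ω [] (List.ofFn ys) * sumCost Γ L N K ω [] (List.ofFn ys)


/-- The state trajectory of the separation controller: starting from `ω` at time `k`,
follow the outcomes `ys`, applying at each step the control `ustar(current state, time)`. -/
def sepEvolve {n : ℕ} {U Y : Type*} (Γ : U → Y → Mat n →ₗ[ℂ] Mat n)
    (ustar : Mat n → ℕ → U) : Mat n → ℕ → List Y → Mat n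
  | ω, _, [] => ω
  | ω, k, y :: ys => sepEvolve Γ ustar (lamState Γ (ustar ω k) y ω) (k + 1) ys

/-- The separation controller `K*` determined by `ustar` and the initial state `ω₀`:
on the record `rec` it applies `ustar` to the current conditional state and time. -/
def sepController {n : ℕ} {U Y : Type*} (Γ : U → Y → Mat n →ₗ[ℂ] Mat n)
    (ustar : Mat n → ℕ → U) (ω₀ : Mat n) (rec : List Y) : U :=
  ustar (sepEvolve Γ ustar ω₀ 0 rec) rec.length

section Instrument

variable {n : ℕ} {U Y : Type*} (Γ : U → Y → Mat n →ₗ[ℂ] Mat n)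

lemma trR_real_smul (r : ℝ) (A : Mat n) : trR (r • A) = r * trR A := by
  simp [trR, Matrix.trace_smul]

lemma Matrix.PosSemidef.trR_nonneg {A : Mat n} (hA : A.PosSemidef) : 0 ≤ trR A :=
  (Complex.le_def.mp hA.trace_nonneg).1

lemma pDist_nonneg
    (hPSD : ∀ (u : U) (y : Y) (ω : Mat n), ω.PosSemidef → (Γ u y ω).PosSemidef)
    (u : U) (y : Y) {ω : Mat n} (hω : ω.PosSemidef) : 0 ≤ pDist Γ u y ω :=
  (hPSD u y ω hω).trR_nonneg

lemma posSemidef_lamState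
    (hPSD : ∀ (u : U) (y : Y) (ω : Mat n), ω.PosSemidef → (Γ u y ω).PosSemidef)
    (u : U) (y : Y) {ω : Mat n} (hω : ω.PosSemidef) : (lamState Γ u y ω).PosSemidef :=
  (hPSD u y ω hω).smul (inv_nonneg.mpr (pDist_nonneg Γ hPSD u y hω))

lemma trR_lamState {u : U} {y : Y} {ω : Mat n} (hp : pDist Γ u y ω ≠ 0) :
    trR (lamState Γ u y ω) = 1 := by
  rw [lamState, trR_real_smul]
  exact inv_mul_cancel₀ hp

variable [Fintype Y]

lemma sum_pDist (hNorm : ∀ (u : U) (ω : Mat n), ∑ y : Y, (Γ u y ω).trace = ω.trace)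
    (u : U) (ω : Mat n) : ∑ y : Y, pDist Γ u y ω = trR ω := by
  simpa [pDist, trR, Complex.re_sum] using congrArg Complex.re (hNorm u ω)

lemma sum_pDist_mul_add (hNorm : ∀ (u : U) (ω : Mat n), ∑ y : Y, (Γ u y ω).trace = ω.trace)
    {u : U} {ω : Mat n} (hω : trR ω = 1) (c : ℝ) (f : Y → ℝ) :
    ∑ y : Y, pDist Γ u y ω * (c + f y) = c + ∑ y : Y, f y * pDist Γ u y ω := by
  simp only [mul_add, Finset.sum_add_distrib, ← Finset.sum_mul, sum_pDist Γ hNorm, hω, one_mul]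
  exact congrArg _ (Finset.sum_congr rfl fun _ _ => mul_comm _ _)

end Instrument

lemma Fintype.sum_ofFn_succ {Y β : Type*} [Fintype Y] [AddCommMonoid β] {m : ℕ}
    (g : List Y → β) :
    ∑ ys : Fin (m + 1) → Y, g (List.ofFn ys)
      = ∑ y : Y, ∑ ys : Fin m → Y, g (y :: List.ofFn ys) := by
  rw [← Fintype.sum_prod_type']
  exact Fintype.sum_equiv (Fin.consEquiv fun _ => Y).symm _ _ fun ys =>
    congrArg g (List.ofFn_succ (f := ys))

lemma sepEvolve_append_singleton {n : ℕ} {U Y : Type*} (Γ : U → Y → Mat n →ₗ[ℂ] Mat n)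
    (ustar : Mat n → ℕ → U) (rec : List Y) (ω : Mat n) (k : ℕ) (y : Y) :
    sepEvolve Γ ustar ω k (rec ++ [y])
      = lamState Γ (ustar (sepEvolve Γ ustar ω k rec) (k + rec.length)) y
          (sepEvolve Γ ustar ω k rec) := by
  induction rec generalizing ω k with
  | nil => rfl
  | cons a rec ih =>
    rw [List.length_cons, ← add_assoc, add_right_comm]
    exact ih _ _

section ExpectedCost

variable {n : ℕ} {U Y : Type*} [Fintype Y] (Γ : U → Y → Mat n →ₗ[ℂ] Mat n)
  (L : U → Mat n) (N : Mat n)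

/-- `Jrn Γ L N m K ω` is `expectedCost Γ L N K ω [] m` by definition. -/
def expectedCost (K : List Y → U) (ω : Mat n) (rec : List Y) (m : ℕ) : ℝ :=
  ∑ ys : Fin m → Y, prodP Γ K ω rec (List.ofFn ys) * sumCost Γ L N K ω rec (List.ofFn ys)

lemma sum_prodP_eq_one (hNorm : ∀ (u : U) (ω : Mat n), ∑ y : Y, (Γ u y ω).trace = ω.trace)
    (K : List Y → U) (m : ℕ) {ω : Mat n} {rec : List Y} (hω : trR ω = 1) :
    ∑ ys : Fin m → Y, prodP Γ K ω rec (List.ofFn ys) = 1 := by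
  induction m generalizing ω rec with
  | zero => simp [prodP]
  | succ m ih =>
    rw [Fintype.sum_ofFn_succ]
    refine (Finset.sum_congr rfl fun y _ => ?_).trans ((sum_pDist Γ hNorm (K rec) ω).trans hω)
    simp only [prodP, ← Finset.mul_sum]
    rcases eq_or_ne (pDist Γ (K rec) y ω) 0 with hp | hp
    · simp [hp]
    · rw [ih (trR_lamState Γ hp), mul_one]

lemma expectedCost_zero (K : List Y → U) (ω : Mat n) (rec : List Y) :
    expectedCost Γ L N K ω rec 0 = trR (N * ω) := by
  simp [expectedCost, prodP, sumCost]

lemma expectedCost_succ (hNorm : ∀ (u : U) (ω : Mat n), ∑ y : Y, (Γ u y ω).trace = ω.trace)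
    (K : List Y → U) {ω : Mat n} (rec : List Y) (m : ℕ) (hω : trR ω = 1) :
    expectedCost Γ L N K ω rec (m + 1) = trR (L (K rec) * ω)
      + ∑ y : Y, expectedCost Γ L N K (lamState Γ (K rec) y ω) (rec ++ [y]) m
          * pDist Γ (K rec) y ω := by
  rw [← sum_pDist_mul_add Γ hNorm hω, expectedCost,
    Fintype.sum_ofFn_succ fun l => prodP Γ K ω rec l * sumCost Γ L N K ω rec l]
  refine Finset.sum_congr rfl fun y _ => ?_
  simp only [prodP, sumCost]
  rcases eq_or_ne (pDist Γ (K rec) y ω) 0 with hp | hp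
  · simp [hp]
  · have hmass := sum_prodP_eq_one Γ hNorm K m (rec := rec ++ [y]) (trR_lamState Γ hp)
    calc _ = pDist Γ (K rec) y ω * (trR (L (K rec) * ω)
          * ∑ ys : Fin m → Y, prodP Γ K (lamState Γ (K rec) y ω) (rec ++ [y]) (List.ofFn ys)
          + expectedCost Γ L N K (lamState Γ (K rec) y ω) (rec ++ [y]) m) := by
          simp only [expectedCost, Finset.mul_sum, ← Finset.sum_add_distrib]
          exact Finset.sum_congr rfl fun ys _ => by ring
      _ = _ := by rw [hmass, mul_one]

variable (M : ℕ) (V : Mat n → ℕ → ℝ)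

lemma le_expectedCost [Finite U]
    (hPSD : ∀ (u : U) (y : Y) (ω : Mat n), ω.PosSemidef → (Γ u y ω).PosSemidef)
    (hNorm : ∀ (u : U) (ω : Mat n), ∑ y : Y, (Γ u y ω).trace = ω.trace)
    (hVM : ∀ ω : Mat n, V ω M = trR (N * ω))
    (hVk : ∀ k < M, ∀ ω : Mat n, ω.PosSemidef →
      V ω k = ⨅ u : U,
        (trR (L u * ω) + ∑ y : Y, V (lamState Γ u y ω) (k + 1) * pDist Γ u y ω))
    (K : List Y → U) (m : ℕ) {ω : Mat n} {rec : List Y} (hω : ω.PosSemidef)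
    (htr : trR ω = 1) (hlen : rec.length + m = M) :
    V ω rec.length ≤ expectedCost Γ L N K ω rec m := by
  induction m generalizing ω rec with
  | zero => rw [expectedCost_zero, ← hVM, show rec.length = M by omega]
  | succ m ih =>
    rw [hVk rec.length (by omega) ω hω, expectedCost_succ Γ L N hNorm K rec m htr]
    refine (ciInf_le (Finite.bddBelow_range _) (K rec)).trans
      (add_le_add_right (Finset.sum_le_sum fun y _ => ?_) _)
    rcases eq_or_ne (pDist Γ (K rec) y ω) 0 with hp | hp
    · simp [hp]
    · refine mul_le_mul_of_nonneg_right ?_ (pDist_nonneg Γ hPSD _ _ hω)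
      simpa using ih (rec := rec ++ [y]) (posSemidef_lamState Γ hPSD _ _ hω)
        (trR_lamState Γ hp) (by simp; omega)

lemma expectedCost_sepController
    (hPSD : ∀ (u : U) (y : Y) (ω : Mat n), ω.PosSemidef → (Γ u y ω).PosSemidef)
    (hNorm : ∀ (u : U) (ω : Mat n), ∑ y : Y, (Γ u y ω).trace = ω.trace)
    (hVM : ∀ ω : Mat n, V ω M = trR (N * ω))
    (ustar : Mat n → ℕ → U)
    (hustar : ∀ k < M, ∀ ω : Mat n, ω.PosSemidef →
      trR (L (ustar ω k) * ω)
        + ∑ y : Y, V (lamState Γ (ustar ω k) y ω) (k + 1) * pDist Γ (ustar ω k) y ω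
      = V ω k)
    (ω₀ : Mat n) (m : ℕ) {rec : List Y} (hω : (sepEvolve Γ ustar ω₀ 0 rec).PosSemidef)
    (htr : trR (sepEvolve Γ ustar ω₀ 0 rec) = 1) (hlen : rec.length + m = M) :
    expectedCost Γ L N (sepController Γ ustar ω₀) (sepEvolve Γ ustar ω₀ 0 rec) rec m
      = V (sepEvolve Γ ustar ω₀ 0 rec) rec.length := by
  induction m generalizing rec with
  | zero => rw [expectedCost_zero, ← hVM, show rec.length = M by omega]
  | succ m ih =>
    set u := ustar (sepEvolve Γ ustar ω₀ 0 rec) rec.length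
    have hchild (y : Y) : lamState Γ u y (sepEvolve Γ ustar ω₀ 0 rec)
        = sepEvolve Γ ustar ω₀ 0 (rec ++ [y]) := by
      rw [sepEvolve_append_singleton, zero_add]
    rw [expectedCost_succ Γ L N hNorm _ rec m htr, sepController,
      ← hustar rec.length (by omega) _ hω]
    refine congrArg _ (Finset.sum_congr rfl fun y _ => ?_)
    refine mul_eq_mul_right_iff.mpr (or_iff_not_imp_right.mpr fun hp => ?_)
    have hpsd := posSemidef_lamState Γ hPSD u y hω
    have htr' := trR_lamState Γ hp
    rw [hchild] at hpsd htr' ⊢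
    simpa using ih hpsd htr' (by simp; omega)

end ExpectedCost

theorem riskNeutral_separation_optimal_general
    {n : ℕ} {U Y : Type*} [Fintype U] [Fintype Y]
    (Γ : U → Y → Mat n →ₗ[ℂ] Mat n)
    (hPSD : ∀ (u : U) (y : Y) (ω : Mat n), ω.PosSemidef → (Γ u y ω).PosSemidef)
    (hNorm : ∀ (u : U) (ω : Mat n), ∑ y : Y, (Γ u y ω).trace = ω.trace)
    (L : U → Mat n)
    (N : Mat n)
    (M : ℕ)
    (V : Mat n → ℕ → ℝ)
    (hVM : ∀ ω : Mat n, V ω M = trR (N * ω))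
    (hVk : ∀ k < M, ∀ ω : Mat n, ω.PosSemidef →
      V ω k = ⨅ u : U,
        (trR (L u * ω) + ∑ y : Y, V (lamState Γ u y ω) (k + 1) * pDist Γ u y ω))
    (ustar : Mat n → ℕ → U)
    (hustar : ∀ k < M, ∀ ω : Mat n, ω.PosSemidef →
      trR (L (ustar ω k) * ω)
        + ∑ y : Y, V (lamState Γ (ustar ω k) y ω) (k + 1) * pDist Γ (ustar ω k) y ω
      = V ω k)
    (ω₀ : Mat n) (hω₀ : ω₀.PosSemidef) (hω₀tr : ω₀.trace = 1) :
    Jrn Γ L N M (sepController Γ ustar ω₀) ω₀ = V ω₀ 0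
    ∧ ∀ K : List Y → U, Jrn Γ L N M (sepController Γ ustar ω₀) ω₀ ≤ Jrn Γ L N M K ω₀ := by
  have htr : trR ω₀ = 1 := by simp [trR, hω₀tr]
  have hsep : Jrn Γ L N M (sepController Γ ustar ω₀) ω₀ = V ω₀ 0 :=
    expectedCost_sepController Γ L N M V hPSD hNorm hVM ustar hustar ω₀ M (rec := []) hω₀ htr
      (zero_add M)
  exact ⟨hsep, fun K => hsep ▸
    le_expectedCost Γ L N M V hPSD hNorm hVM hVk K M (rec := []) hω₀ htr (zero_add M)⟩

/-- optimality of the risk-neutral separation controller.  If `V`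
satisfies the dynamic programming equation and `ustar` attains the infimum, then the
separation controller `K*` achieves `J_{ω₀,0}(K*) = V(ω₀,0)` and is optimal. -/
theorem riskNeutral_separation_optimal
    {n : ℕ} {U Y : Type*} [Fintype U] [Nonempty U] [Fintype Y] [Nonempty Y]
    (Γ : U → Y → Mat n →ₗ[ℂ] Mat n)
    (hPSD : ∀ (u : U) (y : Y) (ω : Mat n), ω.PosSemidef → (Γ u y ω).PosSemidef)
    (hNorm : ∀ (u : U) (ω : Mat n), ∑ y : Y, (Γ u y ω).trace = ω.trace)
    (L : U → Mat n) (hL : ∀ u, (L u).PosSemidef)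
    (N : Mat n) (hN : N.PosSemidef)
    (M : ℕ) (hM : 1 ≤ M)
    (V : Mat n → ℕ → ℝ)
    (hVM : ∀ ω : Mat n, V ω M = trR (N * ω))
    (hVk : ∀ k < M, ∀ ω : Mat n, ω.PosSemidef →
      V ω k = ⨅ u : U,
        (trR (L u * ω) + ∑ y : Y, V (lamState Γ u y ω) (k + 1) * pDist Γ u y ω))
    (ustar : Mat n → ℕ → U)
    (hustar : ∀ k < M, ∀ ω : Mat n, ω.PosSemidef →
      trR (L (ustar ω k) * ω)
        + ∑ y : Y, V (lamState Γ (ustar ω k) y ω) (k + 1) * pDist Γ (ustar ω k) y ω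
      = V ω k)
    (ω₀ : Mat n) (hω₀ : ω₀.PosSemidef) (hω₀tr : ω₀.trace = 1) :
    Jrn Γ L N M (sepController Γ ustar ω₀) ω₀ = V ω₀ 0
    ∧ ∀ K : List Y → U, Jrn Γ L N M (sepController Γ ustar ω₀) ω₀ ≤ Jrn Γ L N M K ω₀ :=
  riskNeutral_separation_optimal_general Γ hPSD hNorm L N M V hVM hVk ustar hustar ω₀ hω₀ hω₀tr
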